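/- Let n ≥ 2, let F be the Funk metric on the open unit ball of ℝⁿ, and let 0 < r < 1. For x with |x| = r, set n₊(x) := −((1+r)/r)·x and n₋(x) := ((1−r)/r)·x. Then: (i) F(x, n₊(x)) = 1 and F(x, n₋(x)) = 1; (ii) g_{(x, n₊(x))}(n₊(x), v) = 0 and g_{(x, n₋(x))}(n₋(x), v) = 0 for every v ∈ ℝⁿ with x·v = 0; (iii) n₊(x)·(−x/r) = 1+r > 0 and n₋(x)·(x/r) = 1−r > 0. Hence n₊ and n₋ are, respectively, the F-unit inward and outward normal vector fields along the sphere {|x| = r} = ∂Ω_r. -/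

import Mathlib

/-!
On radial vectors the Funk metric is explicit: `F(x, c x) = c|x|/(1-|x|)` for `c ≥ 0` and
`-c|x|/(1+|x|)` for `c ≤ 0`, which gives the unit normalisations. For the orthogonality write
`F(x, ·) = (√Q + ⟪x, ·⟫)/(1-|x|²)` with `Q(w) = (1-|x|²)|w|² + ⟪x, w⟫²`. For `v ⊥ x`, away from `0`
the derivative of `F(x, ·)²` in direction `v` is a differentiable function times `⟪·, v⟫`;
differentiating this product at `y` in direction `u`, each term carries `⟪y, v⟫` or `⟪u, v⟫`,
both of which vanish for `y = u = c x`.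
-/

/-- The Funk metric on the open unit ball of `ℝⁿ`. -/
noncomputable def funk (n : ℕ) (x y : EuclideanSpace ℝ (Fin n)) : ℝ :=
  (Real.sqrt ((1 - ‖x‖ ^ 2) * ‖y‖ ^ 2 + (inner ℝ x y : ℝ) ^ 2) + (inner ℝ x y : ℝ)) /
    (1 - ‖x‖ ^ 2)

/-- The fundamental tensor of the Funk metric:
`g_{(x,y)}(u,v) = (1/2)·D²(F(x,·)²)(y)[u,v]`. -/
noncomputable def funkG (n : ℕ) (x y u v : EuclideanSpace ℝ (Fin n)) : ℝ :=
  (1 / 2) * (fderiv ℝ (fun z => (fderiv ℝ (fun w => (funk n x w) ^ 2) z) v) y) u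

open Real RealInnerProductSpace

section Funk

variable {n : ℕ} {x : EuclideanSpace ℝ (Fin n)}

noncomputable def funkRadicand (x w : EuclideanSpace ℝ (Fin n)) : ℝ :=
  (1 - ‖x‖ ^ 2) * ‖w‖ ^ 2 + ⟪x, w⟫ ^ 2

lemma funk_eq (w : EuclideanSpace ℝ (Fin n)) :
    funk n x w = (√(funkRadicand x w) + ⟪x, w⟫) / (1 - ‖x‖ ^ 2) := rfl

lemma funk_smul_self (c : ℝ) :
    funk n x (c • x) = (|c| * ‖x‖ + c * ‖x‖ ^ 2) / (1 - ‖x‖ ^ 2) := by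
  have h : (1 - ‖x‖ ^ 2) * (|c| * ‖x‖) ^ 2 + (c * ‖x‖ ^ 2) ^ 2 = (|c| * ‖x‖) ^ 2 := by
    rw [mul_pow, sq_abs]; ring
  rw [funk_eq, funkRadicand, norm_smul, real_inner_smul_right, real_inner_self_eq_norm_sq,
    Real.norm_eq_abs, h, Real.sqrt_sq (by positivity)]

lemma funk_smul_self_of_nonneg (hx : ‖x‖ < 1) {c : ℝ} (hc : 0 ≤ c) :
    funk n x (c • x) = c * ‖x‖ / (1 - ‖x‖) := by
  have : 1 - ‖x‖ ^ 2 ≠ 0 := by nlinarith [norm_nonneg x]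
  have : 1 - ‖x‖ ≠ 0 := by linarith
  rw [funk_smul_self, abs_of_nonneg hc, div_eq_div_iff ‹_› ‹_›]
  ring

lemma funk_smul_self_of_nonpos (hx : ‖x‖ < 1) {c : ℝ} (hc : c ≤ 0) :
    funk n x (c • x) = -c * ‖x‖ / (1 + ‖x‖) := by
  have : 1 - ‖x‖ ^ 2 ≠ 0 := by nlinarith [norm_nonneg x]
  have : 1 + ‖x‖ ≠ 0 := by positivity
  rw [funk_smul_self, abs_of_nonpos hc, div_eq_div_iff ‹_› ‹_›]
  ring

lemma funkRadicand_pos (hx : ‖x‖ < 1) {z : EuclideanSpace ℝ (Fin n)} (hz : z ≠ 0) :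
    0 < funkRadicand x z := by
  have : 0 < 1 - ‖x‖ ^ 2 := by nlinarith [norm_nonneg x]
  have : 0 < ‖z‖ := norm_pos_iff.mpr hz
  unfold funkRadicand
  positivity

lemma hasFDerivAt_funkRadicand (z : EuclideanSpace ℝ (Fin n)) :
    HasFDerivAt (funkRadicand x)
      ((2 * (1 - ‖x‖ ^ 2)) • innerSL ℝ z + (2 * ⟪x, z⟫) • innerSL ℝ x) z := by
  have := ((hasFDerivAt_id z).norm_sq.const_mul (1 - ‖x‖ ^ 2)).add
    (((innerSL ℝ x).hasFDerivAt (x := z)).pow 2)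
  refine this.congr_fderiv ?_
  ext v
  simp only [id_eq, ContinuousLinearMap.comp_id, coe_innerSL_apply, Nat.add_one_sub_one, pow_one,
    nsmul_eq_mul, Nat.cast_ofNat, add_apply, smul_apply, smul_eq_mul, add_left_inj]
  ring

lemma hasFDerivAt_funk {z : EuclideanSpace ℝ (Fin n)} (hz : funkRadicand x z ≠ 0) :
    HasFDerivAt (funk n x) ((1 - ‖x‖ ^ 2)⁻¹ • ((1 / (2 * √(funkRadicand x z))) •
      ((2 * (1 - ‖x‖ ^ 2)) • innerSL ℝ z + (2 * ⟪x, z⟫) • innerSL ℝ x) + innerSL ℝ x)) z := by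
  have := ((hasFDerivAt_funkRadicand z).sqrt hz).add ((innerSL ℝ x).hasFDerivAt (x := z))
  have hfunk : funk n x = fun w => (1 - ‖x‖ ^ 2)⁻¹ * (√(funkRadicand x w) + ⟪x, w⟫) := by
    ext w
    rw [funk_eq, div_eq_inv_mul]
  rw [hfunk]
  exact this.const_mul _

lemma fderiv_funk_apply_of_inner_eq_zero (hx : ‖x‖ < 1) {z v : EuclideanSpace ℝ (Fin n)}
    (hz : z ≠ 0) (hv : ⟪x, v⟫ = 0) :
    fderiv ℝ (funk n x) z v = ⟪z, v⟫ / √(funkRadicand x z) := by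
  have ha : 1 - ‖x‖ ^ 2 ≠ 0 := by nlinarith [norm_nonneg x]
  have hR := funkRadicand_pos hx hz
  rw [(hasFDerivAt_funk hR.ne').fderiv]
  simp only [add_apply, smul_apply, coe_innerSL_apply, smul_eq_mul, hv, mul_zero, add_zero]
  field_simp

lemma fderiv_funk_sq_apply_of_inner_eq_zero (hx : ‖x‖ < 1) {z v : EuclideanSpace ℝ (Fin n)}
    (hz : z ≠ 0) (hv : ⟪x, v⟫ = 0) :
    fderiv ℝ (fun w => funk n x w ^ 2) z v =
      2 * funk n x z / √(funkRadicand x z) * ⟪z, v⟫ := by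
  rw [fderiv_fun_pow _ (hasFDerivAt_funk (funkRadicand_pos hx hz).ne').differentiableAt]
  simp only [Nat.add_one_sub_one, pow_one, nsmul_eq_mul, Nat.cast_ofNat,
    smul_apply, fderiv_funk_apply_of_inner_eq_zero hx hz hv, smul_eq_mul]
  ring

lemma funkG_eq_zero_of_inner_eq_zero (hx : ‖x‖ < 1) {y u v : EuclideanSpace ℝ (Fin n)}
    (hy : y ≠ 0) (hxv : ⟪x, v⟫ = 0) (hyv : ⟪y, v⟫ = 0) (huv : ⟪u, v⟫ = 0) :
    funkG n x y u v = 0 := by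
  have hR := funkRadicand_pos hx hy
  have hcoeff : DifferentiableAt ℝ (fun z => 2 * funk n x z / √(funkRadicand x z)) y := by
    have := (hasFDerivAt_funk hR.ne').differentiableAt
    have := (hasFDerivAt_funkRadicand y).differentiableAt.sqrt hR.ne'
    fun_prop (disch := exact (Real.sqrt_pos.2 hR).ne')
  have hlocal : (fun z => fderiv ℝ (fun w => funk n x w ^ 2) z v) =ᶠ[nhds y]
      fun z => 2 * funk n x z / √(funkRadicand x z) * innerSL ℝ v z :=
    (eventually_ne_nhds hy).mono fun z hz => by
      dsimp only
      rw [fderiv_funk_sq_apply_of_inner_eq_zero hx hz hxv, innerSL_apply_apply, real_inner_comm]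
  rw [real_inner_comm] at hyv huv
  unfold funkG
  rw [hlocal.fderiv_eq, fderiv_fun_mul hcoeff (innerSL ℝ v).differentiableAt,
    ContinuousLinearMap.fderiv]
  simp [hyv, huv]

lemma funkG_smul_self_eq_zero (hx : ‖x‖ < 1) (hx0 : x ≠ 0) {c : ℝ} (hc : c ≠ 0)
    {v : EuclideanSpace ℝ (Fin n)} (hv : ⟪x, v⟫ = 0) :
    funkG n x (c • x) (c • x) v = 0 := by
  have hcv : ⟪c • x, v⟫ = 0 := by rw [real_inner_smul_left, hv, mul_zero]
  exact funkG_eq_zero_of_inner_eq_zero hx (smul_ne_zero hc hx0) hv hcv hcv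

end Funk

theorem funk_normal_vectors_general (n : ℕ) (r : ℝ) (hr0 : 0 < r) (hr1 : r < 1)
    (x : EuclideanSpace ℝ (Fin n)) (hx : ‖x‖ = r) :
    (funk n x (-(((1 + r) / r) • x)) = 1 ∧ funk n x (((1 - r) / r) • x) = 1) ∧
    (∀ v : EuclideanSpace ℝ (Fin n), (inner ℝ x v : ℝ) = 0 →
      funkG n x (-(((1 + r) / r) • x)) (-(((1 + r) / r) • x)) v = 0 ∧
      funkG n x (((1 - r) / r) • x) (((1 - r) / r) • x) v = 0) ∧
    ((inner ℝ (-(((1 + r) / r) • x)) (-(r⁻¹ • x)) : ℝ) = 1 + r ∧ (0:ℝ) < 1 + r ∧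
     (inner ℝ (((1 - r) / r) • x) (r⁻¹ • x) : ℝ) = 1 - r ∧ (0:ℝ) < 1 - r) := by
  have hx1 : ‖x‖ < 1 := hx ▸ hr1
  have hx0 : x ≠ 0 := norm_pos_iff.mp (hx ▸ hr0)
  have hxx : ⟪x, x⟫ = r ^ 2 := by rw [real_inner_self_eq_norm_sq, hx]
  have hplus : 0 < (1 + r) / r := by positivity
  have h1r : 0 < 1 - r := sub_pos.2 hr1
  have hminus : 0 < (1 - r) / r := by positivity
  simp only [← neg_smul]
  refine ⟨⟨?_, ?_⟩, fun v hv => ⟨?_, ?_⟩, ?_, by linarith, ?_, h1r⟩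
  · rw [funk_smul_self_of_nonpos hx1 (by linarith), hx]
    field_simp
  · rw [funk_smul_self_of_nonneg hx1 hminus.le, hx]
    field_simp
  · exact funkG_smul_self_eq_zero hx1 hx0 (neg_ne_zero.2 hplus.ne') hv
  · exact funkG_smul_self_eq_zero hx1 hx0 hminus.ne' hv
  · rw [real_inner_smul_left, real_inner_smul_right, hxx]
    field_simp
  · rw [real_inner_smul_left, real_inner_smul_right, hxx]
    field_simp

/-- For `|x| = r`, the vectors `n₊(x) = −((1+r)/r)·x` and `n₋(x) = ((1−r)/r)·x` are the
`F`-unit inward and outward normal vectors of the sphere `{|x| = r}` for the Funk metric: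
they are `F`-unit, `g`-orthogonal to the tangent space of the sphere, and point inward
(resp. outward). -/
theorem funk_normal_vectors (n : ℕ) (hn : 2 ≤ n) (r : ℝ) (hr0 : 0 < r) (hr1 : r < 1)
    (x : EuclideanSpace ℝ (Fin n)) (hx : ‖x‖ = r) :
    (funk n x (-(((1 + r) / r) • x)) = 1 ∧ funk n x (((1 - r) / r) • x) = 1) ∧
    (∀ v : EuclideanSpace ℝ (Fin n), (inner ℝ x v : ℝ) = 0 →
      funkG n x (-(((1 + r) / r) • x)) (-(((1 + r) / r) • x)) v = 0 ∧
      funkG n x (((1 - r) / r) • x) (((1 - r) / r) • x) v = 0) ∧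
    ((inner ℝ (-(((1 + r) / r) • x)) (-(r⁻¹ • x)) : ℝ) = 1 + r ∧ (0:ℝ) < 1 + r ∧
     (inner ℝ (((1 - r) / r) • x) (r⁻¹ • x) : ℝ) = 1 - r ∧ (0:ℝ) < 1 - r) :=
  funk_normal_vectors_general n r hr0 hr1 x hx
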